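/- For finitely generated groups G₁ with symmetric generating set S₁ and G₂ with symmetric generating set S₂, the free product of the Cayley graphs Γ(G₁,S₁) ⋆ Γ(G₂,S₂) is isomorphic to the Cayley graph Γ(G₁ ⋆ G₂, S₁ ⊔ S₂) of the free product group. -/

import Mathlib

variable {ι : Type} [DecidableEq ι]

abbrev Letter (V : ι → Type) := Σ i, V i

def upd {V : ι → Type} (u : ∀ i, V i) : List (Letter V) → ∀ i, V i
  | [] => u
  | ⟨j, x⟩ :: w => Function.update (upd u w) j x

def Adm {V : ι → Type} (u : ∀ i, V i) (w : List (Letter V)) : Prop :=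
  w.Chain' (fun a b => a.1 ≠ b.1) ∧
    ∀ (a : Letter V) (p : List (Letter V)), a :: p <:+ w → a.2 ≠ upd u p a.1

def Word {V : ι → Type} (u : ∀ i, V i) := {w : List (Letter V) // Adm u w}

def emptyWord {V : ι → Type} (u : ∀ i, V i) : Word u :=
  ⟨[], by first | exact List.isChain_nil | exact List.IsChain.nil | simp, by intro a p h; simp at h⟩

def Pre {V : ι → Type} (G : ∀ i, SimpleGraph (V i)) (u : ∀ i, V i)
    (v w : List (Letter V)) : Prop :=
  (∃ (p : List (Letter V)) (j : ι) (a b : V j),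
      (G j).Adj a b ∧ v = ⟨j, a⟩ :: p ∧ w = ⟨j, b⟩ :: p) ∨
  (∃ (j : ι) (a : V j), (G j).Adj (upd u v j) a ∧ w = ⟨j, a⟩ :: v)

def freeProd {V : ι → Type} (G : ∀ i, SimpleGraph (V i)) (u : ∀ i, V i) :
    SimpleGraph (Word u) :=
  SimpleGraph.fromRel fun v w => Pre G u v.1 w.1

/-- The two-element family of vertex types for a binary free product. -/
def pV (α β : Type) : Bool → Type := fun b => match b with
  | false => α
  | true => β

/-- The two-element family of graphs for a binary free product. -/
def pG {α β : Type} (A : SimpleGraph α) (B : SimpleGraph β) :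
    ∀ b, SimpleGraph (pV α β b) := fun b => match b with
  | false => A
  | true => B

/-- The base tuple for a binary free product. -/
def pu {α β : Type} (a : α) (b : β) : ∀ i, pV α β i := fun i => match i with
  | false => a
  | true => b

/-- The binary free product `A ⋆ B` of graphs, with base vertices `a`, `b`. -/
def freeProd2 {α β : Type} (A : SimpleGraph α) (B : SimpleGraph β) (a : α) (b : β) :
    SimpleGraph (Word (pu a b)) :=
  freeProd (pG A B) (pu a b)

/-- The Cayley graph of a group with respect to a generating set. -/
def cayley (H : Type) [Group H] (S : Set H) : SimpleGraph H :=
  SimpleGraph.fromRel fun g h => ∃ s ∈ S, h = g * s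

/-!
Record an admissible word by its increments: the letter `⟨j, x⟩` on top of `p` contributes the
factor `(upd u p j)⁻¹ * x` of the free product of groups. The increments of an admissible word form
a reduced word, which makes the product of the increments a bijection from admissible words onto
the free product. Right multiplication by a letter `t` of a factor acts on admissible words by
absorbing `t` into the top letter of that factor, by cancelling that letter, or by pushing a new
letter; when `t` is a generator these are exactly the edges of the free product of the Cayley
graphs, which are therefore carried to the edges of the Cayley graph of the free product.
-/

open Monoid SimpleGraph

section Words

variable {V : ι → Type}

theorem upd_cons_self (u : ∀ i, V i) (j : ι) (x : V j) (p : List (Letter V)) :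
    upd u (⟨j, x⟩ :: p) j = x :=
  Function.update_self _ _ _

theorem adm_cons {u : ∀ i, V i} {j : ι} {x : V j} {p : List (Letter V)} :
    Adm u (⟨j, x⟩ :: p) ↔ Adm u p ∧ (∀ b ∈ p.head?, j ≠ b.1) ∧ x ≠ upd u p j := by
  constructor
  · rintro ⟨hchain, hsuffix⟩
    obtain ⟨hhead, hchain⟩ := List.isChain_cons.1 hchain
    exact ⟨⟨hchain, fun a q hq => hsuffix a q (hq.trans (List.suffix_cons _ _))⟩, hhead,
      hsuffix ⟨j, x⟩ p (List.suffix_refl _)⟩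
  · rintro ⟨⟨hchain, hsuffix⟩, hhead, hx⟩
    refine ⟨List.isChain_cons.2 ⟨hhead, hchain⟩, fun a q hq => ?_⟩
    rcases List.suffix_cons_iff.1 hq with h | h
    · obtain ⟨rfl, rfl⟩ := List.cons_eq_cons.1 h
      exact hx
    · exact hsuffix a q h

def dropHead (j : ι) : List (Letter V) → List (Letter V)
  | [] => []
  | a :: p => if a.1 = j then p else a :: p

theorem dropHead_eq_self_or (u : ∀ i, V i) (j : ι) (w : List (Letter V)) :
    dropHead j w = w ∨ w = ⟨j, upd u w j⟩ :: dropHead j w := by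
  rcases w with _ | ⟨⟨k, x⟩, p⟩
  · exact Or.inl rfl
  · by_cases hk : k = j
    · subst hk
      simp [dropHead, upd_cons_self]
    · simp [dropHead, hk]

theorem adm_dropHead {u : ∀ i, V i} {j : ι} {w : List (Letter V)} (hw : Adm u w) :
    Adm u (dropHead j w) := by
  rcases dropHead_eq_self_or u j w with h | h
  · rwa [h]
  · rw [h, adm_cons] at hw
    exact hw.1

theorem head_dropHead_ne {j : ι} {w : List (Letter V)} (hw : w.IsChain fun a b => a.1 ≠ b.1) :
    ∀ b ∈ (dropHead j w).head?, j ≠ b.1 := by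
  rcases w with _ | ⟨⟨k, x⟩, p⟩
  · simp [dropHead]
  · by_cases hk : k = j
    · subst hk
      simpa [dropHead] using (List.isChain_cons.1 hw).1
    · simp [dropHead, hk, Ne.symm hk]

variable [∀ i, Group (V i)] (u : ∀ i, V i)

def listProd : List (Letter V) → CoprodI V
  | [] => 1
  | ⟨j, x⟩ :: p => listProd p * CoprodI.of ((upd u p j)⁻¹ * x)

def increments : List (Letter V) → List (Letter V)
  | [] => []
  | ⟨j, x⟩ :: p => ⟨j, (upd u p j)⁻¹ * x⟩ :: increments p

def ofIncrements : List (Letter V) → List (Letter V)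
  | [] => []
  | ⟨j, y⟩ :: l => ⟨j, upd u (ofIncrements l) j * y⟩ :: ofIncrements l

theorem ofIncrements_increments : ∀ w : List (Letter V), ofIncrements u (increments u w) = w
  | [] => rfl
  | ⟨j, x⟩ :: p => by simp [increments, ofIncrements, ofIncrements_increments p]

theorem map_fst_increments : ∀ w : List (Letter V),
    (increments u w).map Sigma.fst = w.map Sigma.fst
  | [] => rfl
  | ⟨j, x⟩ :: p => by simp [increments, map_fst_increments p]

theorem listProd_eq_prod_increments : ∀ w : List (Letter V),
    listProd u w = ((increments u w).reverse.map fun l => CoprodI.of l.2).prod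
  | [] => rfl
  | ⟨j, x⟩ :: p => by simp [listProd, increments, listProd_eq_prod_increments p]

theorem increments_ne_one {w : List (Letter V)} (hw : Adm u w) :
    ∀ a ∈ increments u w, a.2 ≠ 1 := by
  induction w with
  | nil => simp [increments]
  | cons b p ih =>
    obtain ⟨j, x⟩ := b
    rw [adm_cons] at hw
    simp only [increments, List.mem_cons, forall_eq_or_imp, ne_eq, inv_mul_eq_one]
    exact ⟨fun h => hw.2.2 h.symm, ih hw.1⟩

-- A list of letters has its last factor first, hence the reversal.
def Word.toReduced (w : Word u) : CoprodI.Word V where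
  toList := (increments u w.1).reverse
  ne_one a ha := increments_ne_one u w.2 a (List.mem_reverse.1 ha)
  chain_ne := by
    rw [List.isChain_reverse, ← List.isChain_map (R := fun i j => j ≠ i) Sigma.fst,
      map_fst_increments u, List.isChain_map]
    exact w.2.1.imp fun _ _ h => h.symm

def Word.toCoprodI (w : Word u) : CoprodI V := listProd u w.1

theorem Word.toCoprodI_injective : Function.Injective (Word.toCoprodI u) := by
  classical
  intro v w h
  have hprod : (v.toReduced u).prod = (w.toReduced u).prod := by
    simpa [Word.toCoprodI, listProd_eq_prod_increments, CoprodI.Word.prod, Word.toReduced] using h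
  have hred := congrArg CoprodI.Word.toList (CoprodI.Word.equiv.symm.injective hprod)
  simp only [Word.toReduced] at hred
  exact Subtype.ext <|
    Function.LeftInverse.injective (ofIncrements_increments u) (List.reverse_injective hred)

theorem listProd_dropHead (j : ι) (w : List (Letter V)) :
    listProd u w =
      listProd u (dropHead j w) * CoprodI.of ((upd u (dropHead j w) j)⁻¹ * upd u w j) := by
  rcases dropHead_eq_self_or u j w with h | h
  · rw [h, inv_mul_cancel, map_one, mul_one]
  · exact congrArg (listProd u) h

open scoped Classical in
noncomputable def mulLetter (w : List (Letter V)) (j : ι) (t : V j) : List (Letter V) :=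
  if upd u w j * t = upd u (dropHead j w) j then dropHead j w
  else ⟨j, upd u w j * t⟩ :: dropHead j w

theorem adm_mulLetter {w : List (Letter V)} (hw : Adm u w) (j : ι) (t : V j) :
    Adm u (mulLetter u w j t) := by
  unfold mulLetter
  split_ifs with h
  · exact adm_dropHead hw
  · exact adm_cons.2 ⟨adm_dropHead hw, head_dropHead_ne hw.1, h⟩

theorem listProd_mulLetter (w : List (Letter V)) (j : ι) (t : V j) :
    listProd u (mulLetter u w j t) = listProd u w * CoprodI.of t := by
  rw [listProd_dropHead u j w, mul_assoc, ← map_mul, mul_assoc]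
  unfold mulLetter
  split_ifs with h
  · rw [h, inv_mul_cancel, map_one, mul_one]
  · rfl

theorem pre_mulLetter_or_pre {G : ∀ i, SimpleGraph (V i)} (w : List (Letter V)) {j : ι} {t : V j}
    (ht : ∀ x, (G j).Adj x (x * t)) :
    Pre G u w (mulLetter u w j t) ∨ Pre G u (mulLetter u w j t) w := by
  have ht_ne : t ≠ 1 := fun h => (G j).ne_of_adj (ht 1) (by simp [h])
  unfold mulLetter
  split_ifs with h
  · rcases dropHead_eq_self_or u j w with hdrop | hw
    · rw [hdrop, mul_eq_left] at h
      exact (ht_ne h).elim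
    · exact Or.inr (Or.inr ⟨j, upd u w j, h ▸ (ht _).symm, hw⟩)
  · rcases dropHead_eq_self_or u j w with hdrop | hw
    · rw [hdrop]
      exact Or.inl (Or.inr ⟨j, _, ht _, rfl⟩)
    · exact Or.inl (Or.inl ⟨_, j, _, _, ht _, hw, rfl⟩)

theorem Word.exists_toCoprodI_eq_mul (w : Word u) (g : CoprodI V) :
    ∃ w' : Word u, w'.toCoprodI u = w.toCoprodI u * g := by
  induction g using CoprodI.induction_on generalizing w with
  | one => exact ⟨w, (mul_one _).symm⟩
  | of j t => exact ⟨⟨mulLetter u w.1 j t, adm_mulLetter u w.2 j t⟩, listProd_mulLetter u w.1 j t⟩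
  | mul g h hg hh =>
    obtain ⟨w₁, hw₁⟩ := hg w
    obtain ⟨w₂, hw₂⟩ := hh w₁
    exact ⟨w₂, by rw [hw₂, hw₁, mul_assoc]⟩

theorem Word.toCoprodI_surjective : Function.Surjective (Word.toCoprodI u) := fun g => by
  simpa [Word.toCoprodI, emptyWord, listProd] using Word.exists_toCoprodI_eq_mul u (emptyWord u) g

noncomputable def Word.equivCoprodI : Word u ≃ CoprodI V :=
  Equiv.ofBijective _ ⟨Word.toCoprodI_injective u, Word.toCoprodI_surjective u⟩

end Words

section CayleyGraphs

variable {H K : Type} [Group H] [Group K]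

theorem cayley_eq_mulCayley (S : Set H) : cayley H S = mulCayley S := by
  ext g h
  simp [cayley, mulCayley, eq_comm]

theorem cayley_adj_iff_adj_one {S : Set H} {g h : H} :
    (cayley H S).Adj g h ↔ (cayley H S).Adj 1 (g⁻¹ * h) := by
  rw [cayley_eq_mulCayley, ← mulCayley_adj_mul_iff_right (d := g⁻¹), inv_mul_cancel]

def cayleyIsoOfMulEquiv (e : H ≃* K) (S : Set H) : cayley H S ≃g cayley K (e '' S) where
  toEquiv := e.toEquiv
  map_rel_iff' {g h} := by
    simp only [cayley_eq_mulCayley, mulCayley_adj, MulEquiv.toEquiv_eq_coe, EquivLike.coe_coe,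
      ← map_inv, ← map_mul, e.injective.mem_set_image, e.injective.ne_iff]

theorem cayley_coprodI_adj_one {κ : Type} {V : κ → Type} [∀ i, Group (V i)] (S : ∀ i, Set (V i))
    {k : CoprodI V} :
    (cayley (CoprodI V) (⋃ i, CoprodI.of '' S i)).Adj 1 k ↔
      ∃ j t, (cayley (V j) (S j)).Adj 1 t ∧ CoprodI.of t = k := by
  simp only [cayley_eq_mulCayley, mulCayley_adj, inv_one, one_mul, mul_one, Set.mem_iUnion,
    Set.mem_image]
  constructor
  · rintro ⟨hk, ⟨j, s, hs, rfl⟩ | ⟨j, s, hs, hsk⟩⟩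
    · exact ⟨j, s, ⟨fun h => hk (by rw [← h, map_one]), Or.inl hs⟩, rfl⟩
    · refine ⟨j, s⁻¹, ⟨fun h => hk ?_, Or.inr (by rwa [inv_inv])⟩, by rw [map_inv, hsk, inv_inv]⟩
      rw [inv_eq_one.1 h.symm, map_one, eq_comm, inv_eq_one] at hsk
      exact hsk.symm
  · rintro ⟨j, t, ⟨ht, hS⟩, rfl⟩
    refine ⟨fun h => ht ((map_eq_one_iff _ (CoprodI.of_injective j)).1 h.symm).symm, ?_⟩
    rcases hS with hS | hS
    · exact Or.inl ⟨j, t, hS, rfl⟩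
    · exact Or.inr ⟨j, t⁻¹, hS, map_inv _ _⟩

end CayleyGraphs

section FreeProduct

variable {V : ι → Type} [∀ i, Group (V i)] (u : ∀ i, V i)

theorem exists_listProd_eq_mul_of_pre {S : ∀ i, Set (V i)} {v w : List (Letter V)}
    (h : Pre (fun i => cayley (V i) (S i)) u v w) :
    ∃ j t, (cayley (V j) (S j)).Adj 1 t ∧ listProd u w = listProd u v * CoprodI.of t := by
  rcases h with ⟨p, j, a, b, hab, rfl, rfl⟩ | ⟨j, a, ha, rfl⟩
  · refine ⟨j, a⁻¹ * b, cayley_adj_iff_adj_one.1 hab, ?_⟩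
    simp only [listProd, mul_assoc, ← map_mul, mul_inv_cancel_left]
  · exact ⟨j, _, cayley_adj_iff_adj_one.1 ha, rfl⟩

noncomputable def freeProdCayleyIso (S : ∀ i, Set (V i)) :
    freeProd (fun i => cayley (V i) (S i)) u ≃g cayley (CoprodI V) (⋃ i, CoprodI.of '' S i) where
  toEquiv := Word.equivCoprodI u
  map_rel_iff' {v w} := by
    change (cayley _ _).Adj (v.toCoprodI u) (w.toCoprodI u) ↔ _
    rw [cayley_adj_iff_adj_one, cayley_coprodI_adj_one, freeProd, fromRel_adj]
    constructor
    · rintro ⟨j, t, ht, hw⟩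
      rw [eq_inv_mul_iff_mul_eq] at hw
      have hne : v ≠ w := by
        rintro rfl
        exact ht.ne ((map_eq_one_iff _ (CoprodI.of_injective j)).1 (mul_eq_left.1 hw)).symm
      obtain rfl : ⟨mulLetter u v.1 j t, adm_mulLetter u v.2 j t⟩ = w :=
        Word.toCoprodI_injective u ((listProd_mulLetter u v.1 j t).trans hw)
      exact ⟨hne, pre_mulLetter_or_pre u v.1 fun x => cayley_adj_iff_adj_one.2 (by simpa using ht)⟩
    · rintro ⟨-, hpre | hpre⟩
      · obtain ⟨j, t, ht, hw⟩ := exists_listProd_eq_mul_of_pre u hpre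
        exact ⟨j, t, ht, by rw [eq_inv_mul_iff_mul_eq]; exact hw.symm⟩
      · obtain ⟨j, t, ht, hv⟩ := exists_listProd_eq_mul_of_pre u hpre
        refine ⟨j, t⁻¹, by simpa using (cayley_adj_iff_adj_one.1 ht.symm), ?_⟩
        rw [eq_inv_mul_iff_mul_eq, map_inv, mul_inv_eq_iff_eq_mul]
        exact hv

end FreeProduct

section Binary

variable {G₁ G₂ : Type} [Group G₁] [Group G₂]

instance : ∀ b, Group (pV G₁ G₂ b)
  | false => ‹Group G₁›
  | true => ‹Group G₂›

def pS (S₁ : Set G₁) (S₂ : Set G₂) : ∀ b, Set (pV G₁ G₂ b)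
  | false => S₁
  | true => S₂

def pInj : ∀ b, pV G₁ G₂ b →* Coprod G₁ G₂
  | false => Coprod.inl
  | true => Coprod.inr

noncomputable def coprodIBoolEquivCoprod : CoprodI (pV G₁ G₂) ≃* Coprod G₁ G₂ :=
  MonoidHom.toMulEquiv (CoprodI.lift pInj)
    (Coprod.lift (CoprodI.of (M := pV G₁ G₂) (i := false))
      (CoprodI.of (M := pV G₁ G₂) (i := true)))
    (CoprodI.ext_hom _ _ fun b => by cases b <;> ext <;> simp <;> rfl)
    (Coprod.hom_ext (by ext; simp; rfl) (by ext; simp; rfl))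

theorem coprodIBoolEquivCoprod_of {b : Bool} (x : pV G₁ G₂ b) :
    coprodIBoolEquivCoprod (CoprodI.of x) = pInj b x :=
  CoprodI.lift_of _ _

theorem coprodIBoolEquivCoprod_image (S₁ : Set G₁) (S₂ : Set G₂) :
    coprodIBoolEquivCoprod '' (⋃ b, CoprodI.of '' pS S₁ S₂ b) =
      (Coprod.inl : G₁ →* Coprod G₁ G₂) '' S₁ ∪ (Coprod.inr : G₂ →* Coprod G₁ G₂) '' S₂ := by
  simp only [Set.image_iUnion, Set.image_image, coprodIBoolEquivCoprod_of]
  ext x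
  simp only [Set.mem_iUnion, Set.mem_image, Bool.exists_bool, Set.mem_union]
  rfl

theorem pG_cayley (S₁ : Set G₁) (S₂ : Set G₂) :
    pG (cayley G₁ S₁) (cayley G₂ S₂) = fun b => cayley (pV G₁ G₂ b) (pS S₁ S₂ b) := by
  funext b
  cases b <;> rfl

end Binary

theorem stmt14_general {G₁ G₂ : Type} [Group G₁] [Group G₂] (S₁ : Set G₁) (S₂ : Set G₂) :
    Nonempty (freeProd2 (cayley G₁ S₁) (cayley G₂ S₂) 1 1
      ≃g cayley (Monoid.Coprod G₁ G₂)
          (⇑(Monoid.Coprod.inl : G₁ →* Monoid.Coprod G₁ G₂) '' S₁ ∪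
           ⇑(Monoid.Coprod.inr : G₂ →* Monoid.Coprod G₁ G₂) '' S₂)) := by
  rw [← coprodIBoolEquivCoprod_image, freeProd2, pG_cayley]
  exact ⟨(freeProdCayleyIso (pu 1 1) (pS S₁ S₂)).trans
    (cayleyIsoOfMulEquiv coprodIBoolEquivCoprod _)⟩

/-- The free product of the Cayley graphs of two finitely generated groups
(with finite symmetric generating sets not containing the identity) is
isomorphic to the Cayley graph of the free product of the groups with
respect to the disjoint union of the generating sets. -/
theorem stmt14 {G₁ G₂ : Type} [Group G₁] [Group G₂] (S₁ : Set G₁) (S₂ : Set G₂)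
    (hfin₁ : S₁.Finite) (hfin₂ : S₂.Finite)
    (hsymm₁ : ∀ s ∈ S₁, s⁻¹ ∈ S₁) (hsymm₂ : ∀ s ∈ S₂, s⁻¹ ∈ S₂)
    (hone₁ : (1 : G₁) ∉ S₁) (hone₂ : (1 : G₂) ∉ S₂)
    (hgen₁ : Subgroup.closure S₁ = ⊤) (hgen₂ : Subgroup.closure S₂ = ⊤) :
    Nonempty (freeProd2 (cayley G₁ S₁) (cayley G₂ S₂) 1 1
      ≃g cayley (Monoid.Coprod G₁ G₂)
          (⇑(Monoid.Coprod.inl : G₁ →* Monoid.Coprod G₁ G₂) '' S₁ ∪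
           ⇑(Monoid.Coprod.inr : G₂ →* Monoid.Coprod G₁ G₂) '' S₂)) :=
  stmt14_general S₁ S₂
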